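/- arXiv:2209.06510 — 2 statements merged into one kernel-verified Lean document; each statement's English description precedes it below -/
import Mathlib

section
/- Let p be a prime with p > 13. Then Ω(p^2 - 1) = 6 if and only if one of the following holds for some primes r, s: (a) p - 1 = 4r and p + 1 = 6s; (b) p - 1 = 6r and p + 1 = 4s; (c) p - 1 = 2r and p + 1 = 12s; (d) p - 1 = 12r and p + 1 = 2s. -/
def Omega (n : ℕ) : ℕ := n.primeFactorsList.length

lemma omega_mul {a b : ℕ} (ha : a ≠ 0) (hb : b ≠ 0) : Omega (a*b) = Omega a + Omega b := by
  simpa [Omega] using (Nat.perm_primeFactorsList_mul ha hb).length_eq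

lemma omega_prime_iff {n : ℕ} : Omega n = 1 ↔ n.Prime := by
  rw [show Omega n = ArithmeticFunction.cardFactors n from (ArithmeticFunction.cardFactors_apply).symm]
  exact ArithmeticFunction.cardFactors_eq_one_iff_prime

lemma omega_pos {n : ℕ} (h : 2 ≤ n) : 1 ≤ Omega n := by
  rw [Omega]
  rcases Nat.exists_prime_and_dvd (by omega : n ≠ 1) with ⟨q, hq, hdvd⟩
  have : q ∈ n.primeFactorsList := (Nat.mem_primeFactorsList_iff_dvd (by omega) hq).mpr hdvd
  exact List.length_pos_iff.mpr (List.ne_nil_of_mem this)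

lemma omega_two : Omega 2 = 1 := omega_prime_iff.mpr Nat.prime_two
lemma omega_four : Omega 4 = 2 := by
  rw [show (4:ℕ)=2*2 from rfl, omega_mul (by norm_num) (by norm_num), omega_two]
lemma omega_six : Omega 6 = 2 := by
  rw [show (6:ℕ)=2*3 from rfl, omega_mul (by norm_num) (by norm_num), omega_two,
    omega_prime_iff.mpr Nat.prime_three]
lemma omega_twelve : Omega 12 = 3 := by
  rw [show (12:ℕ)=2*6 from rfl, omega_mul (by norm_num) (by norm_num), omega_two, omega_six]

lemma omega_prod (c a d b : ℕ) (hc : c ≠ 0) (ha : a ≠ 0) (hd : d ≠ 0) (hb : b ≠ 0) :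
    Omega ((c*a)*(d*b)) = Omega c + Omega a + (Omega d + Omega b) := by
  rw [omega_mul (Nat.mul_ne_zero hc ha) (Nat.mul_ne_zero hd hb), omega_mul hc ha, omega_mul hd hb]

lemma two_primes {a b : ℕ} (ha : 2 ≤ a) (hb : 2 ≤ b) (hsum : Omega a + Omega b = 2) :
    a.Prime ∧ b.Prime := by
  have h1 := omega_pos ha
  have h2 := omega_pos hb
  exact ⟨omega_prime_iff.mp (by omega), omega_prime_iff.mp (by omega)⟩

theorem omega_eq_six_iff (p : ℕ) (hp : p.Prime) (h : 13 < p) :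
    Omega (p ^ 2 - 1) = 6 ↔
      ∃ r s : ℕ, r.Prime ∧ s.Prime ∧
        ((p - 1 = 4 * r ∧ p + 1 = 6 * s) ∨
         (p - 1 = 6 * r ∧ p + 1 = 4 * s) ∨
         (p - 1 = 2 * r ∧ p + 1 = 12 * s) ∨
         (p - 1 = 12 * r ∧ p + 1 = 2 * s)) := by
  have hfac : p ^ 2 - 1 = (p - 1) * (p + 1) := by
    obtain ⟨m, rfl⟩ := Nat.exists_eq_add_of_le (by omega : 1 ≤ p)
    have h1 : (1 + m) ^ 2 = m * (1 + m + 1) + 1 := by ring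
    have h2 : 1 + m - 1 = m := by omega
    rw [h2]
    omega
  constructor
  · intro h6
    have h2 : p % 2 = 1 := by rcases hp.eq_two_or_odd with h' | h' <;> omega
    have h3 : p % 3 ≠ 0 := by
      intro h'
      have := (Nat.prime_dvd_prime_iff_eq Nat.prime_three hp).mp (Nat.dvd_of_mod_eq_zero h')
      omega
    have hcases : ∃ k, p = 12*k+1 ∨ p = 12*k+5 ∨ p = 12*k+7 ∨ p = 12*k+11 := ⟨p / 12, by omega⟩
    obtain ⟨k, hk | hk | hk | hk⟩ := hcases
    · -- case (d)
      have hA : p - 1 = 12 * k := by omega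
      have hB : p + 1 = 2 * (6*k+1) := by omega
      rw [hfac, hA, hB, omega_prod 12 k 2 (6*k+1) (by omega) (by omega) (by omega) (by omega),
        omega_twelve, omega_two] at h6
      obtain ⟨hr, hs⟩ := two_primes (a := k) (b := 6*k+1) (by omega) (by omega) (by omega)
      exact ⟨k, 6*k+1, hr, hs, Or.inr (Or.inr (Or.inr ⟨hA, hB⟩))⟩
    · -- case (a)
      have hA : p - 1 = 4 * (3*k+1) := by omega
      have hB : p + 1 = 6 * (2*k+1) := by omega
      rw [hfac, hA, hB, omega_prod 4 (3*k+1) 6 (2*k+1) (by omega) (by omega) (by omega) (by omega),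
        omega_four, omega_six] at h6
      obtain ⟨hr, hs⟩ := two_primes (a := 3*k+1) (b := 2*k+1) (by omega) (by omega) (by omega)
      exact ⟨3*k+1, 2*k+1, hr, hs, Or.inl ⟨hA, hB⟩⟩
    · -- case (b)
      have hA : p - 1 = 6 * (2*k+1) := by omega
      have hB : p + 1 = 4 * (3*k+2) := by omega
      rw [hfac, hA, hB, omega_prod 6 (2*k+1) 4 (3*k+2) (by omega) (by omega) (by omega) (by omega),
        omega_six, omega_four] at h6
      obtain ⟨hr, hs⟩ := two_primes (a := 2*k+1) (b := 3*k+2) (by omega) (by omega) (by omega)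
      exact ⟨2*k+1, 3*k+2, hr, hs, Or.inr (Or.inl ⟨hA, hB⟩)⟩
    · -- case (c)
      have hA : p - 1 = 2 * (6*k+5) := by omega
      have hB : p + 1 = 12 * (k+1) := by omega
      rw [hfac, hA, hB, omega_prod 2 (6*k+5) 12 (k+1) (by omega) (by omega) (by omega) (by omega),
        omega_two, omega_twelve] at h6
      obtain ⟨hr, hs⟩ := two_primes (a := 6*k+5) (b := k+1) (by omega) (by omega) (by omega)
      exact ⟨6*k+5, k+1, hr, hs, Or.inr (Or.inr (Or.inl ⟨hA, hB⟩))⟩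
  · rintro ⟨r, s, hr, hs, hc⟩
    have hr0 : r ≠ 0 := hr.pos.ne'
    have hs0 : s ≠ 0 := hs.pos.ne'
    have hr1 : Omega r = 1 := omega_prime_iff.mpr hr
    have hs1 : Omega s = 1 := omega_prime_iff.mpr hs
    rcases hc with ⟨hA, hB⟩ | ⟨hA, hB⟩ | ⟨hA, hB⟩ | ⟨hA, hB⟩
    · rw [hfac, hA, hB, omega_prod 4 r 6 s (by omega) hr0 (by omega) hs0, omega_four, omega_six,
        hr1, hs1]
    · rw [hfac, hA, hB, omega_prod 6 r 4 s (by omega) hr0 (by omega) hs0, omega_six, omega_four,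
        hr1, hs1]
    · rw [hfac, hA, hB, omega_prod 2 r 12 s (by omega) hr0 (by omega) hs0, omega_two, omega_twelve,
        hr1, hs1]
    · rw [hfac, hA, hB, omega_prod 12 r 2 s (by omega) hr0 (by omega) hs0, omega_twelve, omega_two,
        hr1, hs1]
end

section
/- If p is prime, e ≥ 1, n ≥ 2 and d = (p^{ne} - 1)/(p^e - 1) is prime, then e is a power of n (possibly n^0 = 1). -/
open Polynomial Finset

-- key: d = product of cyclotomic evals over T = (n*e).divisors \ e.divisors,
-- each factor ≥ 2, T contains n*e; primality forces T = {n*e}.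

lemma two_le_cyclo_eval {p m : ℕ} (hp : 2 ≤ p) (hm : 2 ≤ m) :
    2 ≤ (Polynomial.cyclotomic m ℤ).eval (p : ℤ) := by
  have hpos : 0 < (Polynomial.cyclotomic m ℤ).eval (p : ℤ) :=
    Polynomial.cyclotomic_pos' m (by exact_mod_cast hp)
  have h := Polynomial.sub_one_lt_natAbs_cyclotomic_eval (n := m) (q := p) (by omega) (by omega)
  have : 1 < ((Polynomial.cyclotomic m ℤ).eval (p : ℤ)).natAbs := by omega
  omega

theorem e_power_of_n_of_repunit_prime (p e n : ℕ) (hp : p.Prime) (he : 1 ≤ e) (hn : 2 ≤ n)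
    (hd : Nat.Prime ((p ^ (n * e) - 1) / (p ^ e - 1))) : ∃ k : ℕ, e = n ^ k := by
  have hp2 : 2 ≤ p := hp.two_le
  set d := (p ^ (n * e) - 1) / (p ^ e - 1) with hdd
  have helt : e < n * e := by nlinarith
  have hemem : e ∈ (n * e).properDivisors :=
    Nat.mem_properDivisors.2 ⟨dvd_mul_left e n, helt⟩
  set T := (n * e).divisors \ e.divisors with hT
  -- the integer identity
  have hkey : ((p : ℤ) ^ e - 1) * ∏ x ∈ T, (cyclotomic x ℤ).eval (p : ℤ)
      = (p : ℤ) ^ (n * e) - 1 := by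
    have := Polynomial.X_pow_sub_one_mul_prod_cyclotomic_eq_X_pow_sub_one_of_dvd ℤ (dvd_mul_left e n) (by omega)
    have := congrArg (Polynomial.eval (p : ℤ)) this
    simpa [Polynomial.eval_prod] using this
  -- d as an integer
  have hdvd : p ^ e - 1 ∣ p ^ (n * e) - 1 := by
    have : p ^ e - 1 ∣ (p ^ e) ^ n - 1 ^ n := Nat.sub_dvd_pow_sub_pow _ 1 n
    simpa [← pow_mul, mul_comm e n] using this
  have hne1 : 1 ≤ p ^ e := Nat.one_le_pow _ _ (by omega)
  have hd_eq : d * (p ^ e - 1) = p ^ (n * e) - 1 := Nat.div_mul_cancel hdvd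
  have hdint : (d : ℤ) = ∏ x ∈ T, (cyclotomic x ℤ).eval (p : ℤ) := by
    have h1 : ((p:ℤ) ^ e - 1) ≠ 0 := by
      have : (1:ℤ) < (p:ℤ) ^ e := one_lt_pow₀ (by exact_mod_cast hp2 : (1:ℤ) < p) (by omega)
      omega
    have h2 : ((p:ℤ) ^ e - 1) * (d : ℤ) = ((p:ℤ) ^ e - 1) * ∏ x ∈ T, (cyclotomic x ℤ).eval (p : ℤ) := by
      rw [hkey]
      have hc : ((d * (p ^ e - 1) : ℕ) : ℤ) = ((p ^ (n * e) - 1 : ℕ) : ℤ) := by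
        exact_mod_cast congrArg (Nat.cast : ℕ → ℤ) hd_eq
      rw [Nat.cast_mul, Nat.cast_sub hne1, Nat.cast_sub (Nat.one_le_pow _ _ (by omega) : 1 ≤ p ^ (n*e))] at hc
      push_cast at hc
      linarith [hc]
    exact mul_left_cancel₀ h1 h2
  -- every element of T is ≥ 2
  have hT2 : ∀ m ∈ T, 2 ≤ m := by
    intro m hm
    rw [hT, Finset.mem_sdiff] at hm
    have h0 : m ≠ 0 := by
      intro h; exact (Nat.pos_of_mem_divisors hm.1).ne' h
    have h1 : m ≠ 1 := by
      intro h
      have h1e : (1:ℕ) ∈ e.divisors := Nat.one_mem_divisors.2 (by omega)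
      exact hm.2 (h ▸ h1e)
    omega
  -- n*e ∈ T
  have hneT : n * e ∈ T := by
    rw [hT, Finset.mem_sdiff]
    refine ⟨Nat.mem_divisors.2 ⟨dvd_rfl, by positivity⟩, ?_⟩
    intro h
    exact absurd (Nat.le_of_dvd (by omega) (Nat.mem_divisors.1 h).1) (by omega)
  -- T = {n*e}
  have hTsing : ∀ m ∈ T, m = n * e := by
    by_contra hcon
    push_neg at hcon
    obtain ⟨m₀, hm₀T, hm₀ne⟩ := hcon
    -- d = f m₀ * rest, rest contains f (n*e) ≥ 2
    have hsplit : (d : ℤ) = (cyclotomic m₀ ℤ).eval (p:ℤ) *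
        ∏ x ∈ T.erase m₀, (cyclotomic x ℤ).eval (p : ℤ) := by
      rw [hdint, ← Finset.mul_prod_erase _ _ hm₀T]
    have ha : 2 ≤ (cyclotomic m₀ ℤ).eval (p:ℤ) := two_le_cyclo_eval hp2 (hT2 _ hm₀T)
    have hb : 2 ≤ ∏ x ∈ T.erase m₀, (cyclotomic x ℤ).eval (p : ℤ) := by
      have hmem : n * e ∈ T.erase m₀ := Finset.mem_erase.2 ⟨fun h => hm₀ne h.symm, hneT⟩
      rw [← Finset.mul_prod_erase _ _ hmem]
      have h1 : 2 ≤ (cyclotomic (n*e) ℤ).eval (p:ℤ) := two_le_cyclo_eval hp2 (hT2 _ hneT)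
      have h2 : 0 < ∏ x ∈ (T.erase m₀).erase (n*e), (cyclotomic x ℤ).eval (p : ℤ) := by
        apply Finset.prod_pos
        intro i hi
        exact Polynomial.cyclotomic_pos' i (by exact_mod_cast hp2)
      nlinarith
    have hdp : Prime (d : ℤ) := Nat.prime_iff_prime_int.1 hd
    rcases hdp.irreducible.isUnit_or_isUnit hsplit with h | h <;>
      · rw [Int.isUnit_iff] at h; omega
  -- now: every prime factor of e is n
  have hqn : ∀ {q : ℕ}, q.Prime → q ∣ e → q = n := by
    intro q hq hqe
    by_contra hqne
    have heq : e = q * (e / q) := (Nat.mul_div_cancel' hqe).symm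
    have hepos : 0 < e / q := Nat.div_pos (Nat.le_of_dvd (by omega) hqe) hq.pos
    have hmem : n * (e / q) ∈ T := by
      rw [hT, Finset.mem_sdiff]
      constructor
      · exact Nat.mem_divisors.2 ⟨mul_dvd_mul_left n (Nat.div_dvd_of_dvd hqe), by positivity⟩
      · intro hcontra
        have hdvde : n * (e / q) ∣ e := (Nat.mem_divisors.1 hcontra).1
        nth_rewrite 2 [heq] at hdvde
        have : n ∣ q := (mul_dvd_mul_iff_right hepos.ne').1 hdvde
        rcases hq.eq_one_or_self_of_dvd n this with h | h
        · omega
        · exact hqne h.symm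
    have := hTsing _ hmem
    have heqq : e / q = e := by
      have hn0 : 0 < n := by omega
      exact Nat.eq_of_mul_eq_mul_left hn0 this
    rw [heqq] at heq
    nlinarith [hq.two_le]
  exact ⟨e.primeFactorsList.length, Nat.eq_prime_pow_of_unique_prime_dvd (by omega) hqn⟩
end
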